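/- arXiv:0804.1963 — 4 statements merged into one kernel-verified Lean document; each statement's English description precedes it below -/
import Mathlib

section
/- Let X be a Banach space and (K_n)_{n∈ℕ} a sequence of compact operators on X with ‖K_n - K‖_{B(X,X)} → 0 for some operator K on X. Then for every λ ≠ 0 which is an eigenvalue of K, there exist a subsequence (K_{n_j}), numbers λ_{n_j} and vectors f_{n_j} ∈ X with ‖f_{n_j}‖_X = 1 such that K_{n_j} f_{n_j} = λ_{n_j} f_{n_j}, λ_{n_j} → λ as j → ∞, and f_{n_j} converges in X to some vector f with Kf = λf and ‖f‖_X = 1. -/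
/-!
The nonzero eigenvalues of a compact operator cannot accumulate: infinitely many of modulus
at least `δ` would, through Riesz's lemma applied to the spans of their eigenvectors, give a
bounded sequence with a `1/2`-separated image. With the Fredholm alternative this makes `λ`
isolated in the spectrum of the compact limit `K`, so small circles around `λ` lie in the
resolvent set of `K`, where the resolvent is bounded by some `M`. Once `2 M ‖Kₙ - K‖ < 1`, a
Neumann series bounds the resolvent of `Kₙ` by `2 M` on the same circle. If `Kₙ` had no
eigenvalue in the disc, the whole disc would lie in its resolvent set, and the maximum principle
would give `‖(λ - Kₙ)⁻¹‖ ≤ 2 M`; but `(λ - Kₙ) f = (K - Kₙ) f` for a unit eigenvector `f` of `K`,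
so `1 ≤ 2 M ‖Kₙ - K‖`. Shrinking the circles yields eigenvalues `λₙ → λ`, and compactness of `K`
makes the normalised eigenvectors converge along a subsequence to a unit eigenvector of `K`.
-/

open Filter Topology Metric Set Module End

section CompactOperator

variable {𝕜 X Y : Type*} [NontriviallyNormedField 𝕜] [NormedAddCommGroup X] [NormedSpace 𝕜 X]
  [NormedAddCommGroup Y] [NormedSpace 𝕜 Y]

theorem IsCompactOperator.tendsto_subseq {T : X →L[𝕜] Y} (hT : IsCompactOperator T)
    {v : ℕ → X} {C : ℝ} (hv : ∀ n, ‖v n‖ ≤ C) :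
    ∃ y, ∃ φ : ℕ → ℕ, StrictMono φ ∧ Tendsto (fun n => T (v (φ n))) atTop (𝓝 y) := by
  obtain ⟨S, hS, hTS⟩ := hT.image_closedBall_subset_compact (f := (T : X →ₗ[𝕜] Y)) C
  obtain ⟨y, -, φ, hφ, hy⟩ :=
    hS.tendsto_subseq fun n => hTS ⟨v n, mem_closedBall_zero_iff.2 (hv n), rfl⟩
  exact ⟨y, φ, hφ, hy⟩

theorem IsCompactOperator.exists_norm_sub_lt {T : X →L[𝕜] Y} (hT : IsCompactOperator T)
    {v : ℕ → X} {C : ℝ} (hv : ∀ n, ‖v n‖ ≤ C) {ε : ℝ} (hε : 0 < ε) :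
    ∃ m n, n < m ∧ ‖T (v m) - T (v n)‖ < ε := by
  obtain ⟨y, φ, hφ, hy⟩ := hT.tendsto_subseq hv
  obtain ⟨N, hN⟩ := Metric.cauchySeq_iff'.1 hy.cauchySeq ε hε
  exact ⟨φ (N + 1), φ N, hφ N.lt_succ_self, by simpa [dist_eq_norm] using hN (N + 1) N.le_succ⟩

end CompactOperator

theorem Submodule.exists_norm_eq_one_le_norm_sub {𝕜 E : Type*} [RCLike 𝕜] [NormedAddCommGroup E]
    [NormedSpace 𝕜 E] {G V : Submodule 𝕜 E} (hG : IsClosed (G : Set E)) (hGV : G < V)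
    {r : ℝ} (hr : r < 1) : ∃ u ∈ V, ‖u‖ = 1 ∧ ∀ y ∈ G, r ≤ ‖u - y‖ := by
  obtain ⟨x, hxV, hxG⟩ := SetLike.exists_of_lt hGV
  obtain ⟨u, -, hu, hfar⟩ := riesz_lemma_of_lt_one (F := G.comap V.subtype)
    (hG.preimage continuous_subtype_val) ⟨⟨x, hxV⟩, hxG⟩ hr
  exact ⟨u, u.2, hu, fun y hy => hfar ⟨y, hGV.le hy⟩ hy⟩

theorem Module.End.sub_smul_mem_span_image_Iio {R M : Type*} [CommRing R] [AddCommGroup M]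
    [Module R M] {f : End R M} {z : ℕ → R} {e : ℕ → M} (he : ∀ n, f (e n) = z n • e n)
    {n : ℕ} {x : M} (hx : x ∈ Submodule.span R (e '' Iio (n + 1))) :
    f x - z n • x ∈ Submodule.span R (e '' Iio n) := by
  induction hx using Submodule.span_induction with
  | mem y hy =>
    obtain ⟨j, hj, rfl⟩ := hy
    rw [he, ← sub_smul]
    rcases (Nat.lt_succ_iff.1 hj).lt_or_eq with hj | rfl
    · exact Submodule.smul_mem _ _ (Submodule.subset_span ⟨j, hj, rfl⟩)
    · simp
  | zero => simp
  | add x y _ _ hx hy =>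
    convert Submodule.add_mem _ hx hy using 1
    rw [map_add, smul_add]
    abel
  | smul a x _ hx =>
    convert Submodule.smul_mem _ a hx using 1
    rw [map_smul, smul_sub, smul_comm]

theorem LinearIndependent.span_image_Iio_lt_succ {R M : Type*} [Ring R] [Nontrivial R]
    [AddCommGroup M] [Module R M] {e : ℕ → M} (he : LinearIndependent R e) (n : ℕ) :
    Submodule.span R (e '' Iio n) < Submodule.span R (e '' Iio (n + 1)) :=
  (Submodule.span_mono (image_mono (Iio_subset_Iio n.le_succ))).lt_of_ne fun h =>
    he.notMem_span_image (s := Iio n) (lt_irrefl n) <| by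
      rw [h]
      exact Submodule.subset_span ⟨n, n.lt_succ_self, rfl⟩

section Spectrum

variable {𝕜 X : Type*} [RCLike 𝕜] [NormedAddCommGroup X] [NormedSpace 𝕜 X]

theorem IsCompactOperator.finite_setOf_hasEigenvalue_le_norm {T : X →L[𝕜] X}
    (hT : IsCompactOperator T) {δ : ℝ} (hδ : 0 < δ) :
    {μ : 𝕜 | HasEigenvalue (T : End 𝕜 X) μ ∧ δ ≤ ‖μ‖}.Finite := by
  rw [← Set.not_infinite]
  intro hinf
  set z : ℕ → 𝕜 := fun n => hinf.natEmbedding _ n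
  have hz : ∀ n, HasEigenvalue (T : End 𝕜 X) (z n) ∧ δ ≤ ‖z n‖ := fun n =>
    (hinf.natEmbedding _ n).2
  choose e he using fun n => (hz n).1.exists_hasEigenvector
  have hTe : ∀ n, (T : End 𝕜 X) (e n) = z n • e n := fun n => (he n).apply_eq_smul
  have hind : LinearIndependent 𝕜 e := eigenvectors_linearIndependent' _ z
    (Subtype.val_injective.comp (hinf.natEmbedding _).injective) e he
  set E : ℕ → Submodule 𝕜 X := fun n => Submodule.span 𝕜 (e '' Iio n)
  have hE_mono : Monotone E := fun m n hmn =>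
    Submodule.span_mono (image_mono (Iio_subset_Iio hmn))
  have hE_closed : ∀ n, IsClosed (E n : Set X) := fun n =>
    have := FiniteDimensional.span_of_finite 𝕜 ((finite_Iio n).image e)
    Submodule.closed_of_finiteDimensional _
  choose u huE hu hfar using fun n => Submodule.exists_norm_eq_one_le_norm_sub (hE_closed n)
    (hind.span_image_Iio_lt_succ n) (by norm_num : (1 : ℝ) / 2 < 1)
  have hzu : ∀ n, T (u n) - z n • u n ∈ E n := fun n => sub_smul_mem_span_image_Iio hTe (huE n)
  have hz0 : ∀ n, z n ≠ 0 := fun n => norm_pos_iff.1 (hδ.trans_le (hz n).2)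
  have hv : ∀ n, ‖(z n)⁻¹ • u n‖ ≤ δ⁻¹ := fun n => by
    rw [norm_smul, hu, mul_one, norm_inv]
    exact inv_anti₀ hδ (hz n).2
  obtain ⟨m, n, hnm, hlt⟩ := hT.exists_norm_sub_lt hv (by norm_num : (0 : ℝ) < 1 / 2)
  refine hlt.not_ge ?_
  have hTun : T (u n) ∈ E m := by
    rw [← sub_add_cancel (T (u n)) (z n • u n)]
    exact hE_mono hnm <|
      Submodule.add_mem _ (hE_mono n.le_succ (hzu n)) (Submodule.smul_mem _ _ (huE n))
  -- `T ((z m)⁻¹ • u m)` is `u m` modulo `E m`, which already contains `T ((z n)⁻¹ • u n)`.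
  have hsplit : T ((z m)⁻¹ • u m) - T ((z n)⁻¹ • u n) =
      u m - ((z n)⁻¹ • T (u n) - (z m)⁻¹ • (T (u m) - z m • u m)) := by
    rw [map_smul, map_smul, smul_sub, smul_smul, inv_mul_cancel₀ (hz0 m), one_smul]
    abel
  rw [hsplit]
  exact hfar m _ <|
    Submodule.sub_mem _ (Submodule.smul_mem _ _ hTun) (Submodule.smul_mem _ _ (hzu m))

theorem IsCompactOperator.eventually_mem_resolventSet [CompleteSpace X] {T : X →L[𝕜] X}
    (hT : IsCompactOperator T) {μ : 𝕜} (hμ : μ ≠ 0) :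
    ∀ᶠ z in 𝓝[≠] μ, z ∈ resolventSet 𝕜 T := by
  have hμ2 : 0 < ‖μ‖ / 2 := half_pos (norm_pos_iff.2 hμ)
  have hfin := hT.finite_setOf_hasEigenvalue_le_norm hμ2
  have hnear : ∀ᶠ z in 𝓝 μ, ‖μ‖ / 2 < ‖z‖ :=
    tendsto_norm.eventually (lt_mem_nhds (half_lt_self (norm_pos_iff.2 hμ)))
  have hfar : ∀ᶠ z in 𝓝 μ, z ∉ {w | HasEigenvalue (T : End 𝕜 X) w ∧ ‖μ‖ / 2 ≤ ‖w‖} \ {μ} :=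
    (hfin.sdiff (t := {μ})).isClosed.compl_mem_nhds fun h => h.2 rfl
  filter_upwards [nhdsWithin_le_nhds hnear, nhdsWithin_le_nhds hfar, self_mem_nhdsWithin]
    with z hz hz' hne
  exact (hT.hasEigenvalue_or_mem_resolventSet (norm_pos_iff.1 (hμ2.trans hz))).resolve_left
    fun h => hz' ⟨⟨h, hz.le⟩, hne⟩

theorem IsCompactOperator.exists_sphere_subset_resolventSet [CompleteSpace X] {T : X →L[𝕜] X}
    (hT : IsCompactOperator T) {μ : 𝕜} (hμ : μ ≠ 0) :
    ∃ r > 0, r < ‖μ‖ ∧ ∀ s ∈ Ioc 0 r, sphere μ s ⊆ resolventSet 𝕜 T := by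
  obtain ⟨ε, hε, hball⟩ := Metric.eventually_nhds_iff_ball.1
    (eventually_nhdsWithin_iff.1 (hT.eventually_mem_resolventSet hμ))
  have hμ2 : 0 < ‖μ‖ / 2 := half_pos (norm_pos_iff.2 hμ)
  refine ⟨min (ε / 2) (‖μ‖ / 2), lt_min (half_pos hε) hμ2,
    (min_le_right _ _).trans_lt (half_lt_self (norm_pos_iff.2 hμ)), fun s hs z hz => ?_⟩
  rw [mem_sphere] at hz
  refine hball z ?_ fun h => ?_
  · rw [mem_ball, hz]
    linarith [hs.2.trans (min_le_left (ε / 2) (‖μ‖ / 2))]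
  · rw [h, dist_self] at hz
    exact hs.1.ne hz

theorem Module.End.HasEigenvalue.exists_norm_eq_one {T : X →L[𝕜] X} {μ : 𝕜}
    (h : HasEigenvalue (T : End 𝕜 X) μ) : ∃ f, ‖f‖ = 1 ∧ T f = μ • f := by
  obtain ⟨x, hx⟩ := h.exists_hasEigenvector
  exact ⟨(‖x‖ : 𝕜)⁻¹ • x, norm_smul_inv_norm hx.2, by
    rw [map_smul, ← ContinuousLinearMap.coe_coe, hx.apply_eq_smul, smul_comm]⟩

end Spectrum

theorem Units.norm_inverse_add_le_two_mul {A : Type*} [NormedRing A] [NormOneClass A]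
    [HasSummableGeomSeries A] (x : Aˣ) {d : A} (hd : ‖(↑x⁻¹ : A)‖ * ‖d‖ ≤ 1 / 2) :
    ‖Ring.inverse (↑x + d)‖ ≤ 2 * ‖(↑x⁻¹ : A)‖ := by
  set t : A := -(↑x⁻¹ * d)
  have ht2 : ‖t‖ ≤ 1 / 2 := by
    rw [norm_neg]
    exact (norm_mul_le _ _).trans hd
  have ht : ‖t‖ < 1 := ht2.trans_lt (by norm_num)
  have hfac : (↑x + d : A) = ↑(x * Units.oneSub t ht) := by
    simp [t, mul_add]
  have hgeom : ‖∑' n, t ^ n‖ ≤ 2 := by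
    refine (tsum_geometric_le_of_norm_lt_one t ht).trans ?_
    rw [norm_one, sub_self, zero_add]
    exact inv_le_of_inv_le₀ (by norm_num) (by linarith)
  rw [hfac, Ring.inverse_unit, mul_inv_rev, Units.val_mul]
  exact (norm_mul_le _ _).trans (mul_le_mul_of_nonneg_right hgeom (norm_nonneg _))

namespace spectrum

theorem norm_resolvent_le_two_mul {𝕜 A : Type*} [NormedField 𝕜] [NormedRing A]
    [NormedAlgebra 𝕜 A] [NormOneClass A] [CompleteSpace A] {a b : A} {z : 𝕜}
    (hz : z ∈ resolventSet 𝕜 a) (hab : ‖resolvent a z‖ * ‖b - a‖ ≤ 1 / 2) :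
    ‖resolvent b z‖ ≤ 2 * ‖resolvent a z‖ := by
  have hR : resolvent a z = ↑hz.unit⁻¹ := by rw [resolvent, ← Ring.inverse_unit, hz.unit_spec]
  have hb : algebraMap 𝕜 A z - b = ↑hz.unit + (a - b) := by rw [hz.unit_spec]; abel
  rw [hR] at hab ⊢
  rw [resolvent, hb]
  exact hz.unit.norm_inverse_add_le_two_mul (by rwa [norm_sub_rev])

theorem norm_resolvent_le_of_closedBall_subset {A : Type*} [NormedRing A] [NormedAlgebra ℂ A]
    [CompleteSpace A] {a : A} {c : ℂ} {r C : ℝ} (hr : 0 < r)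
    (hball : closedBall c r ⊆ resolventSet ℂ a) (hC : ∀ z ∈ sphere c r, ‖resolvent a z‖ ≤ C) :
    ‖resolvent a c‖ ≤ C := by
  have hd : DiffContOnCl ℂ (resolvent a) (ball c r) := by
    refine DifferentiableOn.diffContOnCl fun z hz => ?_
    rw [closure_ball c hr.ne'] at hz
    exact (hasDerivAt_resolvent_const_left (hball hz)).differentiableAt.differentiableWithinAt
  exact Complex.norm_le_of_forall_mem_frontier_norm_le isBounded_ball hd
    (by rwa [frontier_ball c hr.ne']) (subset_closure (mem_ball_self hr))

end spectrum

section Operator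

variable {X : Type*} [NormedAddCommGroup X]

theorem ContinuousLinearMap.norm_le_norm_resolvent_mul_of_apply_eq_smul {𝕜 : Type*}
    [NontriviallyNormedField 𝕜] [NormedSpace 𝕜 X] {T K : X →L[𝕜] X} {μ : 𝕜} {f : X}
    (hμ : μ ∈ resolventSet 𝕜 T) (hf : K f = μ • f) :
    ‖f‖ ≤ ‖resolvent T μ‖ * ‖(T - K) f‖ := by
  have hf' : resolvent T μ ((K - T) f) = f := by
    have : (K - T) f = (algebraMap 𝕜 _ μ - T) f := by simp [hf]
    rw [this, resolvent, ← mul_apply_eq_comp, Ring.inverse_mul_cancel _ hμ,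
      one_apply_eq_self]
  calc ‖f‖ = ‖resolvent T μ ((K - T) f)‖ := by rw [hf']
    _ ≤ ‖resolvent T μ‖ * ‖(K - T) f‖ := ContinuousLinearMap.le_opNorm _ _
    _ = ‖resolvent T μ‖ * ‖(T - K) f‖ := by rw [← neg_sub, neg_apply, norm_neg]

theorem IsCompactOperator.exists_tendsto_of_apply_eq_smul {𝕜 : Type*}
    [NontriviallyNormedField 𝕜] [NormedSpace 𝕜 X] {K : X →L[𝕜] X} (hK : IsCompactOperator K)
    {T : ℕ → X →L[𝕜] X} (hT : Tendsto T atTop (𝓝 K)) {μ : ℕ → 𝕜} {lam : 𝕜}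
    (hμ : Tendsto μ atTop (𝓝 lam)) (hlam : lam ≠ 0) {f : ℕ → X} (hf : ∀ n, ‖f n‖ = 1)
    (hTf : ∀ n, T n (f n) = μ n • f n) :
    ∃ ψ : ℕ → ℕ, StrictMono ψ ∧ ∃ g, Tendsto (f ∘ ψ) atTop (𝓝 g) ∧ K g = lam • g ∧ ‖g‖ = 1 := by
  obtain ⟨y, ψ, hψ, hy⟩ := hK.tendsto_subseq fun n => (hf n).le
  have hdiff : Tendsto (fun n => T n (f n) - K (f n)) atTop (𝓝 0) := by
    refine squeeze_zero_norm (fun n => ?_) (tendsto_iff_norm_sub_tendsto_zero.1 hT)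
    simpa [hf] using (T n - K).le_opNorm (f n)
  have hμf : Tendsto (fun n => μ (ψ n) • f (ψ n)) atTop (𝓝 y) := by
    simpa [hTf] using (hdiff.comp hψ.tendsto_atTop).add hy
  have hμψ := hμ.comp hψ.tendsto_atTop
  have hg : Tendsto (f ∘ ψ) atTop (𝓝 (lam⁻¹ • y)) :=
    ((hμψ.inv₀ hlam).smul hμf).congr' <| (hμψ.eventually_ne hlam).mono fun n hn =>
      inv_smul_smul₀ hn _
  refine ⟨ψ, hψ, lam⁻¹ • y, hg, ?_, ?_⟩
  · rw [tendsto_nhds_unique ((K.continuous.tendsto _).comp hg) hy, smul_inv_smul₀ hlam]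
  · exact tendsto_nhds_unique hg.norm (by simp [hf])

variable [NormedSpace ℂ X] [CompleteSpace X]

theorem IsCompactOperator.exists_hasEigenvalue_mem_closedBall {K T : X →L[ℂ] X}
    (hT : IsCompactOperator T) {lam : ℂ} {r M : ℝ} (hr : 0 < r) (hrlam : r < ‖lam‖)
    (hK : HasEigenvalue (K : End ℂ X) lam) (hres : sphere lam r ⊆ resolventSet ℂ K)
    (hM : ∀ z ∈ sphere lam r, ‖resolvent K z‖ ≤ M) (hTK : 2 * M * ‖T - K‖ < 1) :
    ∃ μ ∈ closedBall lam r, HasEigenvalue (T : End ℂ X) μ := by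
  by_contra! hnone
  obtain ⟨f, hf⟩ := hK.exists_hasEigenvector
  have : Nontrivial X := ⟨⟨f, 0, hf.2⟩⟩
  have hball : closedBall lam r ⊆ resolventSet ℂ T := fun z hz => by
    have hz0 : z ≠ 0 := by
      rintro rfl
      rw [mem_closedBall, dist_zero_left] at hz
      linarith
    exact (hT.hasEigenvalue_or_mem_resolventSet hz0).resolve_left (hnone z hz)
  have hsphere : ∀ z ∈ sphere lam r, ‖resolvent T z‖ ≤ 2 * M := fun z hz => by
    have hKz := hM z hz
    have hsmall : ‖resolvent K z‖ * ‖T - K‖ ≤ 1 / 2 := by nlinarith [norm_nonneg (T - K)]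
    linarith [spectrum.norm_resolvent_le_two_mul (hres hz) hsmall]
  have hlam := spectrum.norm_resolvent_le_of_closedBall_subset hr hball hsphere
  have hf0 : 0 < ‖f‖ := norm_pos_iff.2 hf.2
  refine lt_irrefl ‖f‖ ?_
  calc ‖f‖ ≤ ‖resolvent T lam‖ * ‖(T - K) f‖ :=
        ContinuousLinearMap.norm_le_norm_resolvent_mul_of_apply_eq_smul
          (hball (mem_closedBall_self hr.le)) hf.apply_eq_smul
    _ ≤ 2 * M * (‖T - K‖ * ‖f‖) :=
        mul_le_mul hlam ((T - K).le_opNorm f) (norm_nonneg _) ((norm_nonneg _).trans hlam)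
    _ = 2 * M * ‖T - K‖ * ‖f‖ := by ring
    _ < ‖f‖ := mul_lt_of_lt_one_left hf0 hTK

theorem eventually_exists_hasEigenvalue_mem_closedBall {ι : Type*} {l : Filter ι}
    {K : X →L[ℂ] X} {Kn : ι → X →L[ℂ] X} (hcomp : ∀ᶠ i in l, IsCompactOperator (Kn i))
    (hconv : Tendsto Kn l (𝓝 K)) {lam : ℂ} {r : ℝ} (hr : 0 < r) (hrlam : r < ‖lam‖)
    (hK : HasEigenvalue (K : End ℂ X) lam) (hres : sphere lam r ⊆ resolventSet ℂ K) :
    ∀ᶠ i in l, ∃ μ ∈ closedBall lam r, HasEigenvalue (Kn i : End ℂ X) μ := by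
  obtain ⟨M, hM⟩ := (isCompact_sphere lam r).exists_bound_of_continuousOn fun z hz =>
    (spectrum.hasDerivAt_resolvent_const_left (hres hz)).continuousAt.continuousWithinAt
  have hsmall : ∀ᶠ i in l, 2 * M * ‖Kn i - K‖ < 1 := by
    have := ((tendsto_iff_norm_sub_tendsto_zero.1 hconv).const_mul (2 * M))
    rw [mul_zero] at this
    exact this.eventually_lt_const one_pos
  filter_upwards [hcomp, hsmall] with i hi hi'
  exact hi.exists_hasEigenvalue_mem_closedBall hr hrlam hK hres hM hi'

end Operator

/-- Approximation of eigenvalues of compact operators, Lemma A.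
Let `X` be a complex Banach space and `(Kₙ)` a sequence of compact operators on `X`
converging in operator norm to `K`.  Then for every eigenvalue `λ ≠ 0` of `K` there exist
a subsequence `K_{n_j}`, eigenvalues `λ_{n_j}` of `K_{n_j}` with unit eigenvectors
`f_{n_j}`, such that `λ_{n_j} → λ` and `f_{n_j}` converges to a unit vector `f` with
`K f = λ f`. -/
theorem statement7 (X : Type*) [NormedAddCommGroup X] [NormedSpace ℂ X] [CompleteSpace X]
    (K : X →L[ℂ] X) (Kn : ℕ → X →L[ℂ] X)
    (hcomp : ∀ n : ℕ, IsCompactOperator (Kn n))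
    (hconv : Tendsto (fun n : ℕ => ‖Kn n - K‖) atTop (nhds 0))
    (lam : ℂ) (hlam : lam ≠ 0)
    (heig : ∃ f₀ : X, f₀ ≠ 0 ∧ K f₀ = lam • f₀) :
    ∃ nj : ℕ → ℕ, StrictMono nj ∧
      ∃ (lams : ℕ → ℂ) (fj : ℕ → X) (f : X),
        (∀ j : ℕ, ‖fj j‖ = 1) ∧
        (∀ j : ℕ, Kn (nj j) (fj j) = lams j • fj j) ∧
        Tendsto lams atTop (nhds lam) ∧
        Tendsto fj atTop (nhds f) ∧
        K f = lam • f ∧ ‖f‖ = 1 := by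
  obtain ⟨f₀, hf₀, hKf₀⟩ := heig
  have hKlam : HasEigenvalue (K : End ℂ X) lam :=
    hasEigenvalue_of_hasEigenvector ⟨mem_eigenspace_iff.2 hKf₀, hf₀⟩
  have hKn : Tendsto Kn atTop (𝓝 K) := tendsto_iff_norm_sub_tendsto_zero.2 hconv
  have hK : IsCompactOperator K := isCompactOperator_of_tendsto hKn (.of_forall hcomp)
  obtain ⟨r, hr, hrlam, hres⟩ := hK.exists_sphere_subset_resolventSet hlam
  have hev : ∀ j : ℕ, ∀ᶠ n in atTop,
      ∃ μ ∈ closedBall lam (r / (j + 1)), HasEigenvalue (Kn n : End ℂ X) μ := fun j =>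
    have hrj : r / (j + 1) ≤ r := div_le_self hr.le (by simp)
    eventually_exists_hasEigenvalue_mem_closedBall (.of_forall hcomp) hKn (by positivity)
      (hrj.trans_lt hrlam) hKlam (hres _ ⟨by positivity, hrj⟩)
  obtain ⟨φ, hφ, hφev⟩ := extraction_forall_of_eventually hev
  choose μ hμ hμK using hφev
  choose f hf hKf using fun j => (hμK j).exists_norm_eq_one
  have hμlam : Tendsto μ atTop (𝓝 lam) := tendsto_iff_dist_tendsto_zero.2 <|
    squeeze_zero (fun _ => dist_nonneg) hμ (by
      simpa [Function.comp_def] using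
        (tendsto_const_div_atTop_nhds_zero_nat r).comp (tendsto_add_atTop_nat 1))
  obtain ⟨ψ, hψ, g, hfg, hKg, hg⟩ :=
    hK.exists_tendsto_of_apply_eq_smul (hKn.comp hφ.tendsto_atTop) hμlam hlam hf hKf
  exact ⟨φ ∘ ψ, hφ.comp hψ, μ ∘ ψ, f ∘ ψ, g, fun _ => hf _, fun _ => hKf _,
    hμlam.comp hψ.tendsto_atTop, hfg, hKg, hg⟩
end

section
/- Let ℬ be a Banach space, a > 0, and let F ∈ C²((0,a); ℬ) satisfy F(0) = F(a) = 0 (in the sense of limits at the endpoints), ‖F'(ω)‖_ℬ ≤ C₀ ω^{-1/2} and ‖F''(ω)‖_ℬ ≤ C₀ ω^{-3/2} for all ω ∈ (0,a). Then there exists C > 0 (depending only on C₀ and a) such that for every t > 1, ‖ ∫₀^a e^{itω} F(ω) dω ‖_ℬ ≤ C t^{-3/2}. -/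
/-!
Integrating by parts once, the boundary terms vanish because `F(0) = F(a) = 0`, so the integral
equals `-(it)⁻¹ ∫₀^a e^{itω} F'(ω) dω`, and it suffices to show that this last integral is
`O(t^{-1/2})`. Split it at `ω = 1/t`. On `(0, 1/t)` the bound `‖F'‖ ≤ C₀ ω^{-1/2}` gives
`2 C₀ t^{-1/2}` directly. On `(1/t, a)` integrate by parts again: the boundary terms are
`O(t⁻¹ · t^{1/2})` by the bound on `F'`, and `t⁻¹ ∫_{1/t}^a C₀ ω^{-3/2} dω = O(t^{-1/2})`.
The limit of `F'` at `a` needed for the second boundary term exists since `F''` is integrable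
on `(1/t, a)`.
-/

open Filter Topology intervalIntegral

open MeasureTheory Set

section Primitive

variable {E : Type*} [NormedAddCommGroup E] {f f' : ℝ → E} {p q : ℝ}

theorem intervalIntegrable_of_norm_le_of_continuousOn {g : ℝ → ℝ} (hpq : p ≤ q)
    (hf : ContinuousOn f (Ioo p q)) (hg : IntervalIntegrable g volume p q)
    (hfg : ∀ x ∈ Ioo p q, ‖f x‖ ≤ g x) : IntervalIntegrable f volume p q := by
  rw [intervalIntegrable_iff_integrableOn_Ioo_of_le hpq] at hg ⊢
  exact hg.mono' (hf.aestronglyMeasurable measurableSet_Ioo)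
    ((ae_restrict_iff' measurableSet_Ioo).2 (ae_of_all _ hfg))

variable [NormedSpace ℝ E]

theorem norm_integral_le_of_norm_le_of_mem_Ioo {g : ℝ → ℝ} (hpq : p ≤ q)
    (hfg : ∀ x ∈ Ioo p q, ‖f x‖ ≤ g x) (hg : IntervalIntegrable g volume p q) :
    ‖∫ x in p..q, f x‖ ≤ ∫ x in p..q, g x := by
  refine norm_integral_le_of_norm_le hpq ?_ hg
  filter_upwards [volume.ae_ne q] with x hxq hx using hfg x ⟨hx.1, hx.2.lt_of_ne hxq⟩

variable [CompleteSpace E] {fp : E}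

theorem eqOn_add_integral_of_hasDerivAt_of_tendsto
    (hderiv : ∀ x ∈ Ioo p q, HasDerivAt f (f' x) x) (hint : IntervalIntegrable f' volume p q)
    (hp : Tendsto f (𝓝[>] p) (𝓝 fp)) :
    EqOn f (fun x => fp + ∫ y in p..x, f' y) (Ioo p q) := by
  intro x hx
  show f x = fp + _
  have hsub : Ioo p x ⊆ Ioo p q := Ioo_subset_Ioo_right hx.2.le
  rw [integral_eq_sub_of_hasDerivAt_of_tendsto hx.1 (fun y hy => hderiv y (hsub hy))
    (hint.mono_set (uIcc_subset_uIcc left_mem_uIcc (mem_uIcc_of_le hx.1.le hx.2.le))) hp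
    ((hderiv x hx).continuousAt.tendsto.mono_left nhdsWithin_le_nhds), add_sub_cancel]

theorem intervalIntegrable_of_hasDerivAt_of_tendsto (hpq : p ≤ q)
    (hderiv : ∀ x ∈ Ioo p q, HasDerivAt f (f' x) x) (hint : IntervalIntegrable f' volume p q)
    (hp : Tendsto f (𝓝[>] p) (𝓝 fp)) : IntervalIntegrable f volume p q := by
  have hprim : IntervalIntegrable (fun x => fp + ∫ y in p..x, f' y) volume p q :=
    (continuousOn_const.add
      (continuousOn_primitive_interval' hint left_mem_uIcc)).intervalIntegrable
  rw [intervalIntegrable_iff_integrableOn_Ioo_of_le hpq] at hprim ⊢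
  exact hprim.congr_fun (eqOn_add_integral_of_hasDerivAt_of_tendsto hderiv hint hp).symm
    measurableSet_Ioo

theorem tendsto_nhdsLT_of_hasDerivAt_of_tendsto (hpq : p < q)
    (hderiv : ∀ x ∈ Ioo p q, HasDerivAt f (f' x) x) (hint : IntervalIntegrable f' volume p q)
    (hp : Tendsto f (𝓝[>] p) (𝓝 fp)) :
    Tendsto f (𝓝[<] q) (𝓝 (fp + ∫ y in p..q, f' y)) := by
  have hprim : ContinuousWithinAt (fun x => fp + ∫ y in p..x, f' y) (Icc p q) q := by
    have := continuousOn_primitive_interval' hint left_mem_uIcc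
    rw [uIcc_of_le hpq.le] at this
    exact continuousWithinAt_const.add (this q (right_mem_Icc.2 hpq.le))
  refine (hprim.mono_of_mem_nhdsWithin ?_).tendsto.congr' ?_
  · exact mem_of_superset (Ioo_mem_nhdsLT hpq) Ioo_subset_Icc_self
  · filter_upwards [Ioo_mem_nhdsLT hpq] with x hx
    exact (eqOn_add_integral_of_hasDerivAt_of_tendsto hderiv hint hp hx).symm

end Primitive

theorem integral_rpow_neg_half (s : ℝ) :
    ∫ ω in (0 : ℝ)..s, ω ^ (-(1 : ℝ) / 2) = 2 * s ^ ((1 : ℝ) / 2) := by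
  rw [integral_rpow (Or.inl (by norm_num))]
  norm_num
  ring

theorem integral_rpow_neg_three_half_le {s a : ℝ} (hs : 0 < s) (hsa : s ≤ a) :
    ∫ ω in s..a, ω ^ (-(3 : ℝ) / 2) ≤ 2 * s ^ (-(1 : ℝ) / 2) := by
  rw [integral_rpow (Or.inr ⟨by norm_num, notMem_uIcc_of_lt hs (hs.trans_le hsa)⟩)]
  have := Real.rpow_nonneg (hs.trans_le hsa).le (-(1 : ℝ) / 2)
  norm_num
  linarith

section Oscillatory

variable {B : Type*} [NormedAddCommGroup B] [NormedSpace ℂ B]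

theorem norm_exp_I_mul_ofReal_smul (t ω : ℝ) (x : B) :
    ‖Complex.exp (Complex.I * t * ω) • x‖ = ‖x‖ := by
  rw [norm_smul, show Complex.I * t * ω = ((t * ω : ℝ) : ℂ) * Complex.I by push_cast; ring,
    Complex.norm_exp_ofReal_mul_I, one_mul]

theorem norm_inv_I_mul_ofReal {t : ℝ} (ht : 0 < t) : ‖(Complex.I * t)⁻¹‖ = t⁻¹ := by
  simp [abs_of_pos ht]

theorem hasDerivAt_exp_I_mul_ofReal (t ω : ℝ) :
    HasDerivAt (fun ω : ℝ => Complex.exp (Complex.I * t * ω))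
      (Complex.I * t * Complex.exp (Complex.I * t * ω)) ω := by
  have := ((hasDerivAt_id (ω : ℂ)).const_mul (Complex.I * t)).cexp
  simpa [mul_comm] using this.comp_ofReal

theorem continuous_exp_I_mul_ofReal (t : ℝ) :
    Continuous fun ω : ℝ => Complex.exp (Complex.I * t * ω) := by
  fun_prop

theorem integral_exp_I_mul_ofReal_smul_eq [CompleteSpace B] {t : ℝ} (ht : t ≠ 0) {p q : ℝ}
    (hpq : p < q) {G G' : ℝ → B} {Gp Gq : B} (hderiv : ∀ x ∈ Ioo p q, HasDerivAt G (G' x) x)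
    (hp : Tendsto G (𝓝[>] p) (𝓝 Gp)) (hq : Tendsto G (𝓝[<] q) (𝓝 Gq))
    (hG : IntervalIntegrable G volume p q) (hG' : IntervalIntegrable G' volume p q) :
    ∫ x in p..q, Complex.exp (Complex.I * t * x) • G x =
      (Complex.I * t)⁻¹ • (Complex.exp (Complex.I * t * q) • Gq -
        Complex.exp (Complex.I * t * p) • Gp -
        ∫ x in p..q, Complex.exp (Complex.I * t * x) • G' x) := by
  set c : ℂ := (Complex.I * t)⁻¹
  have hc : c * (Complex.I * t) = 1 := inv_mul_cancel₀ (by simp [ht])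
  have he := continuous_exp_I_mul_ofReal t
  have hint₁ := hG.continuousOn_smul he.continuousOn
  have hint₂ : IntervalIntegrable
      (fun x => c • (Complex.exp (Complex.I * t * x) • G' x)) volume p q :=
    (hG'.continuousOn_smul he.continuousOn).smul c
  have hlim {r : ℝ} {l : Filter ℝ} {Gr : B} (hl : l ≤ 𝓝 r) (hr : Tendsto G l (𝓝 Gr)) :
      Tendsto (fun x : ℝ => (c * Complex.exp (Complex.I * t * x)) • G x) l
        (𝓝 ((c * Complex.exp (Complex.I * t * r)) • Gr)) :=
    (((he.tendsto r).mono_left hl).const_mul c).smul hr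
  have key := integral_eq_sub_of_hasDerivAt_of_tendsto hpq
    (f := fun x => (c * Complex.exp (Complex.I * t * x)) • G x)
    (f' := fun x => Complex.exp (Complex.I * t * x) • G x +
      c • (Complex.exp (Complex.I * t * x) • G' x))
    (fun x hx => (((hasDerivAt_exp_I_mul_ofReal t x).const_mul c).smul (hderiv x hx)).congr_deriv
      (by rw [← mul_assoc, hc, one_mul, mul_smul, add_comm]))
    (hint₁.add hint₂) (hlim nhdsWithin_le_nhds hp) (hlim nhdsWithin_le_nhds hq)
  rw [integral_add hint₁ hint₂, intervalIntegral.integral_smul] at key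
  rw [smul_sub, smul_sub, ← mul_smul, ← mul_smul, ← key]
  abel

end Oscillatory

section Bounds

variable {B : Type*} [NormedAddCommGroup B] [NormedSpace ℂ B] {C₀ t s a : ℝ} {F' F'' : ℝ → B}

theorem norm_integral_exp_smul_le_of_norm_le_rpow_neg_half (hs : 0 ≤ s)
    (hb : ∀ ω ∈ Ioo 0 s, ‖F' ω‖ ≤ C₀ * ω ^ (-(1 : ℝ) / 2)) :
    ‖∫ ω in (0 : ℝ)..s, Complex.exp (Complex.I * t * ω) • F' ω‖ ≤ 2 * C₀ * s ^ ((1 : ℝ) / 2) :=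
  calc ‖∫ ω in (0 : ℝ)..s, Complex.exp (Complex.I * t * ω) • F' ω‖
      ≤ ∫ ω in (0 : ℝ)..s, C₀ * ω ^ (-(1 : ℝ) / 2) :=
        norm_integral_le_of_norm_le_of_mem_Ioo hs
          (fun ω hω => (norm_exp_I_mul_ofReal_smul t ω _).trans_le (hb ω hω))
          ((intervalIntegrable_rpow' (by norm_num)).const_mul C₀)
    _ = 2 * C₀ * s ^ ((1 : ℝ) / 2) := by
        rw [intervalIntegral.integral_const_mul, integral_rpow_neg_half]
        ring

theorem norm_integral_exp_smul_le_of_norm_deriv_le_rpow [CompleteSpace B] (hC₀ : 0 ≤ C₀)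
    (ht : 0 < t) (hs : 0 < s) (hsa : s < a) (hd : ∀ ω ∈ Ico s a, HasDerivAt F' (F'' ω) ω)
    (hF''c : ContinuousOn F'' (Ioo s a)) (hb₁ : ∀ ω ∈ Ico s a, ‖F' ω‖ ≤ C₀ * ω ^ (-(1 : ℝ) / 2))
    (hb₂ : ∀ ω ∈ Ioo s a, ‖F'' ω‖ ≤ C₀ * ω ^ (-(3 : ℝ) / 2)) :
    ‖∫ ω in s..a, Complex.exp (Complex.I * t * ω) • F' ω‖ ≤ 4 * C₀ * t⁻¹ * s ^ (-(1 : ℝ) / 2) := by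
  have hderiv : ∀ ω ∈ Ioo s a, HasDerivAt F' (F'' ω) ω := fun ω hω => hd ω (Ioo_subset_Ico_self hω)
  have hg : IntervalIntegrable (fun ω : ℝ => C₀ * ω ^ (-(3 : ℝ) / 2)) volume s a :=
    (intervalIntegrable_rpow (Or.inr (notMem_uIcc_of_lt hs (hs.trans hsa)))).const_mul C₀
  have hF'' : IntervalIntegrable F'' volume s a :=
    intervalIntegrable_of_norm_le_of_continuousOn hsa.le hF''c hg hb₂
  have hlim_s : Tendsto F' (𝓝[>] s) (𝓝 (F' s)) :=
    (hd s ⟨le_rfl, hsa⟩).continuousAt.tendsto.mono_left nhdsWithin_le_nhds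
  have hlim_a := tendsto_nhdsLT_of_hasDerivAt_of_tendsto hsa hderiv hF'' hlim_s
  have hF' := intervalIntegrable_of_hasDerivAt_of_tendsto hsa.le hderiv hF'' hlim_s
  have hbs : ∀ ω ∈ Ico s a, ‖F' ω‖ ≤ C₀ * s ^ (-(1 : ℝ) / 2) := fun ω hω =>
    (hb₁ ω hω).trans (mul_le_mul_of_nonneg_left
      (Real.rpow_le_rpow_of_nonpos hs hω.1 (by norm_num)) hC₀)
  have hlim_a_le : ‖F' s + ∫ ω in s..a, F'' ω‖ ≤ C₀ * s ^ (-(1 : ℝ) / 2) :=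
    le_of_tendsto hlim_a.norm (by
      filter_upwards [Ioo_mem_nhdsLT hsa] with ω hω using hbs ω (Ioo_subset_Ico_self hω))
  have hF''_le : ‖∫ ω in s..a, Complex.exp (Complex.I * t * ω) • F'' ω‖
      ≤ 2 * (C₀ * s ^ (-(1 : ℝ) / 2)) :=
    calc ‖∫ ω in s..a, Complex.exp (Complex.I * t * ω) • F'' ω‖
        ≤ ∫ ω in s..a, C₀ * ω ^ (-(3 : ℝ) / 2) :=
          norm_integral_le_of_norm_le_of_mem_Ioo hsa.le
            (fun ω hω => (norm_exp_I_mul_ofReal_smul t ω _).trans_le (hb₂ ω hω)) hg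
      _ ≤ C₀ * (2 * s ^ (-(1 : ℝ) / 2)) := by
          rw [intervalIntegral.integral_const_mul]
          exact mul_le_mul_of_nonneg_left (integral_rpow_neg_three_half_le hs hsa.le) hC₀
      _ = _ := by ring
  rw [integral_exp_I_mul_ofReal_smul_eq ht.ne' hsa hderiv hlim_s hlim_a hF' hF'', norm_smul,
    norm_inv_I_mul_ofReal ht]
  calc t⁻¹ * ‖Complex.exp (Complex.I * t * a) • (F' s + ∫ ω in s..a, F'' ω) -
        Complex.exp (Complex.I * t * s) • F' s -
        ∫ ω in s..a, Complex.exp (Complex.I * t * ω) • F'' ω‖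
      ≤ t⁻¹ * (‖F' s + ∫ ω in s..a, F'' ω‖ + ‖F' s‖ +
        ‖∫ ω in s..a, Complex.exp (Complex.I * t * ω) • F'' ω‖) := by
        gcongr
        refine (norm_sub_le _ _).trans (add_le_add ((norm_sub_le _ _).trans_eq ?_) le_rfl)
        rw [norm_exp_I_mul_ofReal_smul, norm_exp_I_mul_ofReal_smul]
    _ ≤ t⁻¹ * (C₀ * s ^ (-(1 : ℝ) / 2) + C₀ * s ^ (-(1 : ℝ) / 2) +
        2 * (C₀ * s ^ (-(1 : ℝ) / 2))) :=
        mul_le_mul_of_nonneg_left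
          (add_le_add (add_le_add hlim_a_le (hbs s ⟨le_rfl, hsa⟩)) hF''_le) (inv_nonneg.2 ht.le)
    _ = 4 * C₀ * t⁻¹ * s ^ (-(1 : ℝ) / 2) := by ring

theorem norm_integral_exp_smul_le_rpow_neg_half [CompleteSpace B] (hC₀ : 0 ≤ C₀) (ha : 0 < a)
    (ht : 0 < t) (hd : ∀ ω ∈ Ioo 0 a, HasDerivAt F' (F'' ω) ω)
    (hF''c : ContinuousOn F'' (Ioo 0 a)) (hb₁ : ∀ ω ∈ Ioo 0 a, ‖F' ω‖ ≤ C₀ * ω ^ (-(1 : ℝ) / 2))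
    (hb₂ : ∀ ω ∈ Ioo 0 a, ‖F'' ω‖ ≤ C₀ * ω ^ (-(3 : ℝ) / 2)) :
    ‖∫ ω in (0 : ℝ)..a, Complex.exp (Complex.I * t * ω) • F' ω‖ ≤ 6 * C₀ * t ^ (-(1 : ℝ) / 2) := by
  have hinv : t⁻¹ ^ ((1 : ℝ) / 2) = t ^ (-(1 : ℝ) / 2) := by
    rw [Real.inv_rpow ht.le, ← Real.rpow_neg ht.le]
    norm_num
  rcases le_or_gt a t⁻¹ with hat | hta
  · calc ‖∫ ω in (0 : ℝ)..a, Complex.exp (Complex.I * t * ω) • F' ω‖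
        ≤ 2 * C₀ * a ^ ((1 : ℝ) / 2) :=
          norm_integral_exp_smul_le_of_norm_le_rpow_neg_half ha.le hb₁
      _ ≤ 2 * C₀ * t ^ (-(1 : ℝ) / 2) := by rw [← hinv]; gcongr
      _ ≤ 6 * C₀ * t ^ (-(1 : ℝ) / 2) := by
          have := Real.rpow_nonneg ht.le (-(1 : ℝ) / 2)
          nlinarith
  have hs : 0 < t⁻¹ := inv_pos.2 ht
  have hsplit : t⁻¹ ∈ uIcc 0 a := mem_uIcc_of_le hs.le hta.le
  have hint : IntervalIntegrable (fun ω : ℝ => Complex.exp (Complex.I * t * ω) • F' ω)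
      volume 0 a :=
    (intervalIntegrable_of_norm_le_of_continuousOn ha.le
      (fun ω hω => (hd ω hω).continuousAt.continuousWithinAt)
      ((intervalIntegrable_rpow' (by norm_num)).const_mul C₀) hb₁).continuousOn_smul
      (continuous_exp_I_mul_ofReal t).continuousOn
  have hsub : Ico t⁻¹ a ⊆ Ioo 0 a := fun ω hω => ⟨hs.trans_le hω.1, hω.2⟩
  rw [← integral_add_adjacent_intervals (hint.mono_set (uIcc_subset_uIcc left_mem_uIcc hsplit))
    (hint.mono_set (uIcc_subset_uIcc hsplit right_mem_uIcc))]
  calc _ ≤ ‖∫ ω in (0 : ℝ)..t⁻¹, Complex.exp (Complex.I * t * ω) • F' ω‖ +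
        ‖∫ ω in t⁻¹..a, Complex.exp (Complex.I * t * ω) • F' ω‖ := norm_add_le _ _
    _ ≤ 2 * C₀ * t⁻¹ ^ ((1 : ℝ) / 2) + 4 * C₀ * t⁻¹ * t⁻¹ ^ (-(1 : ℝ) / 2) :=
        add_le_add
          (norm_integral_exp_smul_le_of_norm_le_rpow_neg_half hs.le
            fun ω hω => hb₁ ω ⟨hω.1, hω.2.trans hta⟩)
          (norm_integral_exp_smul_le_of_norm_deriv_le_rpow hC₀ ht hs hta
            (fun ω hω => hd ω (hsub hω)) (hF''c.mono (Ioo_subset_Ioo_left hs.le))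
            (fun ω hω => hb₁ ω (hsub hω)) fun ω hω => hb₂ ω (hsub (Ioo_subset_Ico_self hω)))
    _ = 6 * C₀ * t ^ (-(1 : ℝ) / 2) := by
        rw [← hinv, show (1 : ℝ) / 2 = -(1 : ℝ) / 2 + 1 by norm_num, Real.rpow_add_one hs.ne']
        ring

end Bounds

/-- Jensen–Kato lemma, Lemma C.
Let `ℬ` be a complex Banach space, `a > 0` and `C₀ > 0`.  There is `C > 0`, depending only
on `C₀` and `a`, such that whenever `F ∈ C²((0,a); ℬ)` satisfies `F(0) = F(a) = 0` (as
limits at the endpoints), `‖F'(ω)‖ ≤ C₀ ω^{-1/2}` and `‖F''(ω)‖ ≤ C₀ ω^{-3/2}` on `(0,a)`,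
then `‖∫₀^a e^{itω} F(ω) dω‖ ≤ C t^{-3/2}` for every `t > 1`. -/
theorem statement9 (B : Type*) [NormedAddCommGroup B] [NormedSpace ℂ B] [CompleteSpace B]
    (a : ℝ) (ha : 0 < a) (C₀ : ℝ) (hC₀ : 0 < C₀) :
    ∃ C : ℝ, 0 < C ∧ ∀ F F' F'' : ℝ → B,
      (∀ ω ∈ Set.Ioo (0 : ℝ) a, HasDerivAt F (F' ω) ω) →
      (∀ ω ∈ Set.Ioo (0 : ℝ) a, HasDerivAt F' (F'' ω) ω) →
      ContinuousOn F'' (Set.Ioo (0 : ℝ) a) →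
      Tendsto F (nhdsWithin 0 (Set.Ioi (0 : ℝ))) (nhds 0) →
      Tendsto F (nhdsWithin a (Set.Iio a)) (nhds 0) →
      (∀ ω ∈ Set.Ioo (0 : ℝ) a, ‖F' ω‖ ≤ C₀ * ω ^ (-(1 : ℝ) / 2)) →
      (∀ ω ∈ Set.Ioo (0 : ℝ) a, ‖F'' ω‖ ≤ C₀ * ω ^ (-(3 : ℝ) / 2)) →
      ∀ t : ℝ, 1 < t →
        ‖∫ ω in (0 : ℝ)..a, Complex.exp (Complex.I * (t : ℂ) * (ω : ℂ)) • F ω‖ ≤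
          C * t ^ (-(3 : ℝ) / 2) := by
  refine ⟨6 * C₀, by positivity, fun F F' F'' hd₁ hd₂ hF''c hF₀ hFa hb₁ hb₂ t ht => ?_⟩
  have ht₀ : 0 < t := one_pos.trans ht
  have hF' : IntervalIntegrable F' volume 0 a :=
    intervalIntegrable_of_norm_le_of_continuousOn ha.le
      (fun ω hω => (hd₂ ω hω).continuousAt.continuousWithinAt)
      ((intervalIntegrable_rpow' (by norm_num)).const_mul C₀) hb₁
  have hF := intervalIntegrable_of_hasDerivAt_of_tendsto ha.le hd₁ hF' hF₀
  rw [integral_exp_I_mul_ofReal_smul_eq ht₀.ne' ha hd₁ hF₀ hFa hF hF', smul_zero, smul_zero,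
    sub_zero, zero_sub, norm_smul, norm_neg, norm_inv_I_mul_ofReal ht₀]
  calc t⁻¹ * ‖∫ ω in (0 : ℝ)..a, Complex.exp (Complex.I * t * ω) • F' ω‖
      ≤ t⁻¹ * (6 * C₀ * t ^ (-(1 : ℝ) / 2)) := by
        gcongr
        exact norm_integral_exp_smul_le_rpow_neg_half hC₀.le ha ht₀ hd₂ hF''c hb₁ hb₂
    _ = 6 * C₀ * t ^ (-(3 : ℝ) / 2) := by
        rw [show -(3 : ℝ) / 2 = -(1 : ℝ) / 2 + -1 by norm_num, Real.rpow_add ht₀,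
          Real.rpow_neg_one]
        ring
end

section
/- Fix σ > 5/2. Then there exist C > 0 and ω₀ > 0 such that for all 0 < ω < ω₀, the boundary value of the free resolvent satisfies ‖R₀^+(ω) - i R₋₁/√ω - R₀‖_{B(σ,-σ)} ≤ C √ω, where (R₋₁ f)_n = (1/2) ∑_{m∈ℤ} f_m and (R₀ f)_n = -(1/2) ∑_{m∈ℤ} |n-m| f_m. Moreover, R₋₁ and R₀ are Hilbert–Schmidt operators from l²_{σ'}(ℤ) to l²_{-σ'}(ℤ) for every σ' > 3/2. -/
open scoped ENNReal NNReal BigOperators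
open Complex Filter Topology

noncomputable section

/-- The weight `(1+n²)^σ` as an extended nonnegative real. -/
def wt (σ : ℝ) (n : ℤ) : ℝ≥0∞ := ENNReal.ofReal (1 + (n : ℝ) ^ 2) ^ σ

/-- The weighted `l²_σ` norm `(∑ (1+n²)^σ |u_n|²)^{1/2}` of a complex sequence (possibly `∞`). -/
def wnorm2 (σ : ℝ) (u : ℤ → ℂ) : ℝ≥0∞ :=
  (∑' n : ℤ, wt σ n * (‖u n‖₊ : ℝ≥0∞) ^ 2) ^ (1 / 2 : ℝ)

/-- The weighted `l¹_σ` norm `∑ (1+n²)^{σ/2} |u_n|` of a real sequence (possibly `∞`). -/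
def wnorm1 (σ : ℝ) (u : ℤ → ℝ) : ℝ≥0∞ :=
  ∑' n : ℤ, wt (σ / 2) n * (‖u n‖₊ : ℝ≥0∞)

/-- The discrete Schrödinger operator `H = -Δ + V` acting on complex sequences:
`(Hφ)_n = -(φ_{n+1} + φ_{n-1} - 2 φ_n) + V_n φ_n`. -/
def Hop (V : ℤ → ℝ) (φ : ℤ → ℂ) : ℤ → ℂ :=
  fun n => -(φ (n + 1) + φ (n - 1) - 2 * φ n) + (V n : ℂ) * φ n

/-!
Write `s = √ω = -2 sin(θ/2)` and `c = cos(θ/2)`, so that `sin θ = -s c`. Then the kernel of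
`R₀⁺(ω) - i R₋₁ / √ω - R₀` at distance `k = |n - m|` equals
`-(i / (2 sin θ)) (e^{-iθk} - c + i k sin θ)`: the singular parts cancel exactly. Second-order
Taylor bounds give `|θ|² (1 + k²)` for the bracket, and Jordan's inequality gives
`|sin θ|, s ≥ 2|θ|/π`, so the kernel is `O(√ω (1 + n²)(1 + m²))`. By Cauchy–Schwarz an operator
is bounded from `l²_σ` to `l²_{-σ}` by its weighted Hilbert–Schmidt norm, which for such a kernel
is finite as soon as `∑ (1 + n²)^{2-σ} < ∞`, that is `σ > 5/2`. The kernel of `R₋₁` is bounded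
and that of `R₀` is at most `(1 + n²)^{1/2} (1 + m²)^{1/2}`, so both are Hilbert–Schmidt for
`σ' > 3/2`.
-/

open Real

lemma wt_eq_ofReal (q : ℝ) (n : ℤ) : wt q n = ENNReal.ofReal ((1 + (n : ℝ) ^ 2) ^ q) :=
  ENNReal.ofReal_rpow_of_pos (by positivity)

lemma wt_mul_wt (a b : ℝ) (n : ℤ) : wt a n * wt b n = wt (a + b) n := by
  simp only [wt_eq_ofReal]
  rw [← ENNReal.ofReal_mul (by positivity), ← Real.rpow_add (by positivity)]

lemma wt_zero (n : ℤ) : wt 0 n = 1 := by simp [wt]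

lemma wt_natCast (p : ℕ) (n : ℤ) : wt p n = ENNReal.ofReal ((1 + (n : ℝ) ^ 2) ^ p) := by
  rw [wt_eq_ofReal, Real.rpow_natCast]

lemma summable_one_add_sq_rpow {q : ℝ} (hq : q < -1 / 2) :
    Summable fun n : ℤ => (1 + (n : ℝ) ^ 2) ^ q := by
  refine Summable.of_norm_bounded_eventually
    (Real.summable_abs_int_rpow (b := -2 * q) (by linarith)) ?_
  filter_upwards [eventually_cofinite_ne 0] with n hn
  rw [Real.norm_of_nonneg (by positivity), show -(-2 * q) = ((2 : ℕ) : ℝ) * q by push_cast; ring,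
    Real.rpow_mul (abs_nonneg _), Real.rpow_natCast, sq_abs]
  exact Real.rpow_le_rpow_of_nonpos (by positivity) (by linarith) (by linarith)

lemma tsum_wt_ne_top {q : ℝ} (hq : q < -1 / 2) : ∑' n : ℤ, wt q n ≠ ⊤ := by
  simp_rw [wt_eq_ofReal]
  exact ENNReal.ofReal_tsum_of_nonneg (fun n => by positivity) (summable_one_add_sq_rpow hq) ▸
    ENNReal.ofReal_ne_top

lemma ENNReal.tsum_mul_sq_le {ι : Type*} (a b : ι → ℝ≥0∞) :
    (∑' i, a i * b i) ^ 2 ≤ (∑' i, a i ^ 2) * ∑' i, b i ^ 2 := by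
  let _ : MeasurableSpace ι := ⊤
  have hCS := ENNReal.lintegral_mul_le_Lp_mul_Lq (MeasureTheory.Measure.count (α := ι))
    Real.HolderConjugate.two_two (measurable_from_top (f := a)).aemeasurable
    (measurable_from_top (f := b)).aemeasurable
  simp only [MeasureTheory.lintegral_count' measurable_from_top, ENNReal.rpow_two,
    Pi.mul_apply] at hCS
  have hsq (x : ℝ≥0∞) : (x ^ (1 / 2 : ℝ)) ^ 2 = x := by
    simpa using ENNReal.rpow_inv_natCast_pow (n := 2) two_ne_zero x
  calc (∑' i, a i * b i) ^ 2
      ≤ ((∑' i, a i ^ 2) ^ (1 / 2 : ℝ) * (∑' i, b i ^ 2) ^ (1 / 2 : ℝ)) ^ 2 := by gcongr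
    _ = (∑' i, a i ^ 2) * ∑' i, b i ^ 2 := by rw [mul_pow, hsq, hsq]

lemma tsum_enorm_mul_sq_le (σ : ℝ) (g f : ℤ → ℂ) :
    (∑' m, ‖g m * f m‖ₑ) ^ 2 ≤ (∑' m, wt (-σ) m * ‖g m‖ₑ ^ 2) * ∑' m, wt σ m * ‖f m‖ₑ ^ 2 := by
  have hsplit (m : ℤ) : ‖g m * f m‖ₑ = (wt (-σ / 2) m * ‖g m‖ₑ) * (wt (σ / 2) m * ‖f m‖ₑ) := by
    rw [enorm_mul, mul_mul_mul_comm, wt_mul_wt, neg_div, neg_add_cancel, wt_zero, one_mul]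
  have hsq (q : ℝ) (m : ℤ) (z : ℂ) : (wt (q / 2) m * ‖z‖ₑ) ^ 2 = wt q m * ‖z‖ₑ ^ 2 := by
    rw [mul_pow, sq (wt _ _), wt_mul_wt, add_halves]
  simpa only [hsplit, hsq] using ENNReal.tsum_mul_sq_le (fun m => wt (-σ / 2) m * ‖g m‖ₑ)
    (fun m => wt (σ / 2) m * ‖f m‖ₑ)

def hsNormSq (σ : ℝ) (K : ℤ → ℤ → ℂ) : ℝ≥0∞ :=
  ∑' n, ∑' m, wt (-σ) n * wt (-σ) m * ‖K n m‖ₑ ^ 2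

lemma wnorm2_tsum_mul_le (σ : ℝ) (K : ℤ → ℤ → ℂ) (f : ℤ → ℂ) :
    wnorm2 (-σ) (fun n => ∑' m, K n m * f m) ≤ hsNormSq σ K ^ (1 / 2 : ℝ) * wnorm2 σ f := by
  rw [wnorm2, wnorm2, ← ENNReal.mul_rpow_of_nonneg _ _ (by norm_num)]
  gcongr
  calc ∑' n, wt (-σ) n * ‖∑' m, K n m * f m‖ₑ ^ 2
      ≤ ∑' n, wt (-σ) n * ((∑' m, wt (-σ) m * ‖K n m‖ₑ ^ 2) * ∑' m, wt σ m * ‖f m‖ₑ ^ 2) := by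
        refine ENNReal.tsum_le_tsum fun n => mul_le_mul_right ?_ _
        exact (pow_le_pow_left' enorm_tsum_le_tsum_enorm 2).trans (tsum_enorm_mul_sq_le σ _ _)
    _ = hsNormSq σ K * ∑' m, wt σ m * ‖f m‖ₑ ^ 2 := by
        simp_rw [hsNormSq, ← mul_assoc, ENNReal.tsum_mul_right, mul_assoc, ENNReal.tsum_mul_left]

lemma wt_neg_mul_ofReal (σ c : ℝ) (p : ℕ) (n : ℤ) :
    wt (-σ) n * ENNReal.ofReal (c * (1 + (n : ℝ) ^ 2) ^ p) = ENNReal.ofReal c * wt (p - σ) n := by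
  rw [ENNReal.ofReal_mul' (by positivity), ← wt_natCast, mul_left_comm, wt_mul_wt, neg_add_eq_sub]

lemma tsum_wt_mul_enorm_sq_le {σ c : ℝ} {p : ℕ} {g : ℤ → ℂ}
    (hg : ∀ m, ‖g m‖ ^ 2 ≤ c * (1 + (m : ℝ) ^ 2) ^ p) :
    ∑' m, wt (-σ) m * ‖g m‖ₑ ^ 2 ≤ ENNReal.ofReal c * ∑' m, wt (p - σ) m := by
  rw [← ENNReal.tsum_mul_left]
  refine ENNReal.tsum_le_tsum fun m => ?_
  rw [← wt_neg_mul_ofReal, ← ofReal_norm, ← ENNReal.ofReal_pow (norm_nonneg _)]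
  exact mul_le_mul_right (ENNReal.ofReal_le_ofReal (hg m)) _

lemma hsNormSq_le {σ c : ℝ} {p : ℕ} {K : ℤ → ℤ → ℂ}
    (hK : ∀ n m, ‖K n m‖ ^ 2 ≤ c * ((1 + (n : ℝ) ^ 2) ^ p * (1 + (m : ℝ) ^ 2) ^ p)) :
    hsNormSq σ K ≤ ENNReal.ofReal c * (∑' n, wt (p - σ) n) ^ 2 := by
  calc hsNormSq σ K = ∑' n, wt (-σ) n * ∑' m, wt (-σ) m * ‖K n m‖ₑ ^ 2 := by
        simp_rw [hsNormSq, mul_assoc, ENNReal.tsum_mul_left]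
    _ ≤ ∑' n, wt (-σ) n * (ENNReal.ofReal (c * (1 + (n : ℝ) ^ 2) ^ p) * ∑' m, wt (p - σ) m) :=
        ENNReal.tsum_le_tsum fun n => mul_le_mul_right
          (tsum_wt_mul_enorm_sq_le fun m => (hK n m).trans_eq (mul_assoc _ _ _).symm) _
    _ = ENNReal.ofReal c * (∑' n, wt (p - σ) n) ^ 2 := by
        simp_rw [← mul_assoc, wt_neg_mul_ofReal, ENNReal.tsum_mul_right, ENNReal.tsum_mul_left]
        ring

lemma hsNormSq_lt_top {σ c : ℝ} {p : ℕ} (hp : (p : ℝ) - σ < -1 / 2) {K : ℤ → ℤ → ℂ}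
    (hK : ∀ n m, ‖K n m‖ ^ 2 ≤ c * ((1 + (n : ℝ) ^ 2) ^ p * (1 + (m : ℝ) ^ 2) ^ p)) :
    hsNormSq σ K < ⊤ :=
  (hsNormSq_le hK).trans_lt <|
    ENNReal.mul_lt_top ENNReal.ofReal_lt_top (ENNReal.pow_lt_top (tsum_wt_ne_top hp).lt_top)

lemma wnorm2_tsum_mul_le_of_norm_le {σ c : ℝ} (hc : 0 ≤ c) {K : ℤ → ℤ → ℂ}
    (hK : ∀ n m, ‖K n m‖ ≤ c * ((1 + (n : ℝ) ^ 2) * (1 + (m : ℝ) ^ 2))) (f : ℤ → ℂ) :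
    wnorm2 (-σ) (fun n => ∑' m, K n m * f m) ≤
      ENNReal.ofReal c * (∑' n, wt (2 - σ) n) * wnorm2 σ f := by
  refine (wnorm2_tsum_mul_le σ K f).trans (mul_le_mul_left ?_ _)
  have hK2 (n m : ℤ) :
      ‖K n m‖ ^ 2 ≤ c ^ 2 * ((1 + (n : ℝ) ^ 2) ^ 2 * (1 + (m : ℝ) ^ 2) ^ 2) :=
    (pow_le_pow_left₀ (norm_nonneg _) (hK n m) 2).trans_eq (by ring)
  calc hsNormSq σ K ^ (1 / 2 : ℝ)
      ≤ (ENNReal.ofReal (c ^ 2) * (∑' n, wt ((2 : ℕ) - σ) n) ^ 2) ^ (1 / 2 : ℝ) := by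
        gcongr; exact hsNormSq_le hK2
    _ = ENNReal.ofReal c * ∑' n, wt (2 - σ) n := by
        rw [ENNReal.ofReal_pow hc, ← mul_pow, Nat.cast_ofNat]
        simpa using ENNReal.pow_rpow_inv_natCast two_ne_zero _

lemma summable_mul_of_norm_sq_le {σ c : ℝ} {p : ℕ} (hp : (p : ℝ) - σ < -1 / 2) {f g : ℤ → ℂ}
    (hf : wnorm2 σ f ≠ ⊤) (hg : ∀ m, ‖g m‖ ^ 2 ≤ c * (1 + (m : ℝ) ^ 2) ^ p) :
    Summable fun m => g m * f m := by
  have hf' : ∑' m, wt σ m * ‖f m‖ₑ ^ 2 ≠ ⊤ := fun h => hf <| by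
    rw [wnorm2]; exact h ▸ ENNReal.top_rpow_of_pos (by norm_num : (0 : ℝ) < 1 / 2)
  have hsq := (tsum_enorm_mul_sq_le σ g f).trans_lt <| ENNReal.mul_lt_top
    ((tsum_wt_mul_enorm_sq_le hg).trans_lt
      (ENNReal.mul_lt_top ENNReal.ofReal_lt_top (tsum_wt_ne_top hp).lt_top)) hf'.lt_top
  exact .of_norm <| tsum_enorm_ne_top_iff_summable_norm.mp <|
    (ENNReal.pow_ne_top_iff.mp hsq.ne).resolve_right two_ne_zero

lemma one_add_sq_sub_le (x y : ℝ) : 1 + (x - y) ^ 2 ≤ 2 * ((1 + x ^ 2) * (1 + y ^ 2)) := by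
  nlinarith [sq_nonneg (x + y), sq_nonneg (x * y)]

lemma norm_exp_mul_I_sub_one_sub_le (t : ℝ) : ‖exp (t * I) - 1 - t * I‖ ≤ t ^ 2 := by
  have hderiv (x : ℝ) : HasDerivAt (fun x : ℝ => exp (x * I) - 1 - x * I)
      ((exp (x * I) - 1) * I) x := by
    have hlin : HasDerivAt (fun x : ℝ => (x : ℂ) * I) I x := by
      simpa using (hasDerivAt_id x).ofReal_comp.mul_const I
    exact ((hlin.cexp.sub_const 1).sub hlin).congr_deriv (by ring)
  have hbound : ∀ x ∈ Metric.closedBall (0 : ℝ) |t|, ‖(exp (x * I) - 1) * I‖ ≤ |t| := by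
    intro x hx
    rw [norm_mul, Complex.norm_I, mul_one, mul_comm]
    exact Real.norm_exp_I_mul_ofReal_sub_one_le.trans (by simpa using hx)
  have hMVT := Convex.norm_image_sub_le_of_norm_hasDerivWithin_le
    (fun x _ => (hderiv x).hasDerivWithinAt) hbound (convex_closedBall 0 |t|)
    (Metric.mem_closedBall_self (abs_nonneg t)) (by simp : t ∈ Metric.closedBall (0 : ℝ) |t|)
  simpa [← sq] using hMVT

lemma abs_sin_sub_self_le (x : ℝ) : |Real.sin x - x| ≤ x ^ 2 := by
  have him := (abs_im_le_norm _).trans (norm_exp_mul_I_sub_one_sub_le x)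
  simpa [Complex.exp_ofReal_mul_I_im] using him

lemma abs_one_sub_cos_le (x : ℝ) : |1 - Real.cos x| ≤ x ^ 2 / 2 := by
  rw [abs_of_nonneg (by linarith [Real.cos_le_one x])]
  linarith [Real.one_sub_sq_div_two_le_cos (x := x)]

lemma norm_exp_sub_cos_half_add_le (θ k : ℝ) :
    ‖exp (-I * θ * k) - (Real.cos (θ / 2) : ℂ) + I * k * (Real.sin θ : ℂ)‖ ≤
      2 * θ ^ 2 * (1 + k ^ 2) := by
  have hsplit : exp (-I * θ * k) - (Real.cos (θ / 2) : ℂ) + I * k * (Real.sin θ : ℂ) =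
      (exp ((-θ * k : ℝ) * I) - 1 - (-θ * k : ℝ) * I) + ((1 - Real.cos (θ / 2) : ℝ) : ℂ) +
        I * k * ((Real.sin θ - θ : ℝ) : ℂ) := by
    push_cast; ring_nf
  have hexp := norm_exp_mul_I_sub_one_sub_le (-θ * k)
  have hcos := abs_one_sub_cos_le (θ / 2)
  have hsin := abs_sin_sub_self_le θ
  rw [hsplit]
  calc _ ≤ ‖exp ((-θ * k : ℝ) * I) - 1 - (-θ * k : ℝ) * I‖ + |1 - Real.cos (θ / 2)| +
        |k| * |Real.sin θ - θ| := by
        refine norm_add₃_le.trans_eq ?_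
        simp only [norm_mul, Complex.norm_I, Complex.norm_real, Real.norm_eq_abs, one_mul]
    _ ≤ (-θ * k) ^ 2 + (θ / 2) ^ 2 / 2 + |k| * θ ^ 2 := by gcongr
    _ ≤ 2 * θ ^ 2 * (1 + k ^ 2) := by
        nlinarith [sq_nonneg θ, mul_nonneg (sq_nonneg θ) (sq_nonneg (|k| - 1)), sq_abs k]

lemma norm_resolvent_kernel_sub_puiseux_le {θ : ℝ} (hθ₁ : -(π / 2) ≤ θ) (hθ₂ : θ < 0) (k : ℝ) :
    ‖-(I / (2 * (Real.sin θ : ℂ))) * exp (-I * θ * k)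
        - I / (2 * ((-(2 * Real.sin (θ / 2)) : ℝ) : ℂ)) + k / 2‖ ≤
      3 * (-(2 * Real.sin (θ / 2))) * (1 + k ^ 2) := by
  set s := -(2 * Real.sin (θ / 2))
  have hsin : 2 * -θ ≤ π * -Real.sin θ := by
    have h := Real.mul_le_sin (x := -θ) (by linarith) (by linarith)
    rw [Real.sin_neg, div_mul_eq_mul_div, div_le_iff₀ Real.pi_pos] at h
    linarith
  have hs : 2 * -θ ≤ π * s := by
    have h := Real.mul_le_sin (x := -(θ / 2)) (by linarith) (by linarith)
    rw [Real.sin_neg, div_mul_eq_mul_div, div_le_iff₀ Real.pi_pos] at h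
    linarith
  have hS : Real.sin θ = -(s * Real.cos (θ / 2)) := by
    have h := Real.sin_two_mul (θ / 2)
    rw [show 2 * (θ / 2) = θ by ring] at h
    rw [h]; ring
  have hSneg : 0 < -Real.sin θ := by nlinarith [Real.pi_pos]
  have hspos : 0 < s := by nlinarith [Real.pi_pos]
  have hid : -(I / (2 * (Real.sin θ : ℂ))) * exp (-I * θ * k) - I / (2 * (s : ℂ)) + k / 2 =
      -(I / (2 * (Real.sin θ : ℂ))) *
        (exp (-I * θ * k) - (Real.cos (θ / 2) : ℂ) + I * k * (Real.sin θ : ℂ)) := by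
    have hS' : (Real.sin θ : ℂ) = -((s : ℂ) * (Real.cos (θ / 2) : ℂ)) := by exact_mod_cast hS
    have hS0 : (Real.sin θ : ℂ) ≠ 0 := Complex.ofReal_ne_zero.mpr (neg_pos.mp hSneg).ne
    have hs0 : (s : ℂ) ≠ 0 := Complex.ofReal_ne_zero.mpr hspos.ne'
    field_simp
    linear_combination (-I) * hS' + ((s : ℂ) * (Real.sin θ : ℂ) * k) * I_sq
  have hnorm : ‖-(I / (2 * (Real.sin θ : ℂ)))‖ = (2 * -Real.sin θ)⁻¹ := by
    rw [norm_neg, norm_div, Complex.norm_I, norm_mul, Complex.norm_real, Real.norm_eq_abs,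
      abs_of_neg (neg_pos.mp hSneg), Complex.norm_two, one_div]
  have hθsq : θ ^ 2 ≤ 3 * (-Real.sin θ * s) := by
    have hpi : π ^ 2 ≤ 12 := by nlinarith [Real.pi_lt_d2, Real.pi_pos]
    nlinarith [mul_le_mul hsin hs (by linarith) (by positivity),
      mul_le_mul_of_nonneg_right hpi (mul_pos hSneg hspos).le]
  rw [hid, norm_mul, hnorm]
  calc _ ≤ (2 * -Real.sin θ)⁻¹ * (2 * θ ^ 2 * (1 + k ^ 2)) := by
        gcongr; exact norm_exp_sub_cos_half_add_le θ k
    _ ≤ 3 * s * (1 + k ^ 2) := by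
        rw [inv_mul_le_iff₀ (by positivity)]
        nlinarith [mul_le_mul_of_nonneg_right hθsq (by positivity : (0 : ℝ) ≤ 1 + k ^ 2)]

lemma sqrt_two_sub_two_mul_cos {θ : ℝ} (hθ₁ : -π ≤ θ) (hθ₂ : θ ≤ 0) :
    √(2 - 2 * Real.cos θ) = -(2 * Real.sin (θ / 2)) := by
  have hcos := Real.cos_two_mul_eq_one_sub (θ / 2)
  rw [mul_div_cancel₀ θ two_ne_zero] at hcos
  have hsin : Real.sin (θ / 2) ≤ 0 :=
    Real.sin_nonpos_of_nonpos_of_neg_pi_le (by linarith) (by linarith)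
  rw [hcos, show 2 - 2 * (1 - 2 * Real.sin (θ / 2) ^ 2) = (-(2 * Real.sin (θ / 2))) ^ 2 by ring,
    Real.sqrt_sq (by linarith)]

lemma neg_pi_div_two_le_of_cos_pos {θ : ℝ} (hθ : -π ≤ θ) (hcos : 0 < Real.cos θ) :
    -(π / 2) ≤ θ := by
  by_contra! h
  have := Real.cos_nonpos_of_pi_div_two_le_of_le (x := -θ) (by linarith) (by linarith)
  rw [Real.cos_neg] at this
  linarith

lemma resolvent_sub_puiseux_eq_tsum {σ : ℝ} (hσ : 5 / 2 < σ) {f : ℤ → ℂ} (hf : wnorm2 σ f ≠ ⊤)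
    (A B : ℂ) (θ : ℝ) (n : ℤ) :
    A * ∑' m : ℤ, exp (-I * (θ : ℂ) * ((|n - m| : ℤ) : ℂ)) * f m - B * ((1 / 2 : ℂ) * ∑' m, f m)
        - (-(1 / 2 : ℂ) * ∑' m : ℤ, ((|n - m| : ℤ) : ℂ) * f m) =
      ∑' m : ℤ, (A * exp (-I * (θ : ℂ) * ((|n - m| : ℤ) : ℂ)) - B / 2 + ((|n - m| : ℤ) : ℂ) / 2)
        * f m := by
  have hp : ((1 : ℕ) : ℝ) - σ < -1 / 2 := by push_cast; linarith
  have hexp : Summable fun m : ℤ => exp (-I * (θ : ℂ) * ((|n - m| : ℤ) : ℂ)) * f m :=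
    summable_mul_of_norm_sq_le (c := 1) hp hf fun m => by
      simpa [Complex.norm_exp] using sq_nonneg (m : ℝ)
  have hone : Summable f := by
    simpa using summable_mul_of_norm_sq_le (g := fun _ => 1) (c := 1) hp hf fun m => by
      simpa using sq_nonneg (m : ℝ)
  have hdist : Summable fun m : ℤ => ((|n - m| : ℤ) : ℂ) * f m :=
    summable_mul_of_norm_sq_le (c := 2 * (1 + (n : ℝ) ^ 2)) hp hf fun m => by
      rw [Complex.norm_intCast, Int.cast_abs, abs_abs, sq_abs, pow_one, Int.cast_sub]
      nlinarith [one_add_sq_sub_le n m]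
  symm
  calc _ = ∑' m : ℤ, (A * (exp (-I * (θ : ℂ) * ((|n - m| : ℤ) : ℂ)) * f m) - B / 2 * f m
        + 1 / 2 * (((|n - m| : ℤ) : ℂ) * f m)) := tsum_congr fun m => by ring
    _ = A * ∑' m : ℤ, exp (-I * (θ : ℂ) * ((|n - m| : ℤ) : ℂ)) * f m - B / 2 * ∑' m, f m
        + 1 / 2 * ∑' m : ℤ, ((|n - m| : ℤ) : ℂ) * f m := by
      rw [Summable.tsum_add ((hexp.mul_left A).sub (hone.mul_left _)) (hdist.mul_left _),
        Summable.tsum_sub (hexp.mul_left A) (hone.mul_left _), tsum_mul_left, tsum_mul_left,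
        tsum_mul_left]
    _ = _ := by ring

lemma wnorm2_resolvent_sub_puiseux_le {σ θ : ℝ} (hσ : 5 / 2 < σ) (hθ₁ : -(π / 2) ≤ θ)
    (hθ₂ : θ < 0) {f : ℤ → ℂ} (hf : wnorm2 σ f ≠ ⊤) :
    wnorm2 (-σ) (fun n =>
        (-(I / (2 * (Real.sin θ : ℂ))) * ∑' m : ℤ, exp (-I * (θ : ℂ) * ((|n - m| : ℤ) : ℂ)) * f m)
        - (I / ((-(2 * Real.sin (θ / 2)) : ℝ) : ℂ)) * ((1 / 2 : ℂ) * ∑' m : ℤ, f m)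
        - (-(1 / 2 : ℂ) * ∑' m : ℤ, ((|n - m| : ℤ) : ℂ) * f m)) ≤
      ENNReal.ofReal (6 * -(2 * Real.sin (θ / 2))) * (∑' n, wt (2 - σ) n) * wnorm2 σ f := by
  set s := -(2 * Real.sin (θ / 2))
  have hs : 0 ≤ s := by
    linarith [Real.sin_nonpos_of_nonpos_of_neg_pi_le (x := θ / 2) (by linarith) (by linarith)]
  have hK (n m : ℤ) :
      ‖-(I / (2 * (Real.sin θ : ℂ))) * exp (-I * (θ : ℂ) * ((|n - m| : ℤ) : ℂ))
          - I / (s : ℂ) / 2 + ((|n - m| : ℤ) : ℂ) / 2‖ ≤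
        6 * s * ((1 + (n : ℝ) ^ 2) * (1 + (m : ℝ) ^ 2)) := by
    have h := norm_resolvent_kernel_sub_puiseux_le hθ₁ hθ₂ ((|n - m| : ℤ) : ℝ)
    rw [Complex.ofReal_intCast] at h
    have hk : 1 + ((|n - m| : ℤ) : ℝ) ^ 2 ≤ 2 * ((1 + (n : ℝ) ^ 2) * (1 + (m : ℝ) ^ 2)) := by
      rw [Int.cast_abs, sq_abs, Int.cast_sub]
      exact one_add_sq_sub_le n m
    rw [div_div, mul_comm _ (2 : ℂ)]
    refine h.trans ?_
    nlinarith
  simp_rw [resolvent_sub_puiseux_eq_tsum hσ hf]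
  exact wnorm2_tsum_mul_le_of_norm_le (by positivity) hK f

/-- Puiseux expansion of the free resolvent at `ω = 0`.
Fix `σ > 5/2`.  With `θ₊(ω) ∈ (-π,0)` the root of `2 - 2cos θ = ω`, there exist `C > 0`
and `ω₀ > 0` so that `‖R₀⁺(ω) - iR₋₁/√ω - R₀‖_{B(σ,-σ)} ≤ C√ω` for `0 < ω < ω₀`, where
`(R₋₁ f)_n = (1/2)∑_m f_m` and `(R₀ f)_n = -(1/2)∑_m |n-m| f_m`.  Moreover `R₋₁` and `R₀`
are Hilbert–Schmidt from `l²_{σ'}` to `l²_{-σ'}` for every `σ' > 3/2`. -/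
theorem statement14 (σ : ℝ) (hσ : 5 / 2 < σ) (θ : ℝ → ℝ)
    (hθ : ∀ ω ∈ Set.Ioo (0 : ℝ) 4,
      θ ω ∈ Set.Ioo (-Real.pi) 0 ∧ 2 - 2 * Real.cos (θ ω) = ω) :
    (∃ C : ℝ, 0 < C ∧ ∃ ω₀ : ℝ, 0 < ω₀ ∧ ω₀ ≤ 4 ∧
      ∀ ω : ℝ, 0 < ω → ω < ω₀ → ∀ f : ℤ → ℂ,
        wnorm2 (-σ) (fun n =>
            (-(Complex.I / (2 * (Real.sin (θ ω) : ℂ))) *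
              ∑' m : ℤ, Complex.exp (-Complex.I * ((θ ω : ℝ) : ℂ) * ((|n - m| : ℤ) : ℂ)) * f m)
            - (Complex.I / ((Real.sqrt ω : ℝ) : ℂ)) * ((1 / 2 : ℂ) * ∑' m : ℤ, f m)
            - (-(1 / 2 : ℂ) * ∑' m : ℤ, ((|n - m| : ℤ) : ℂ) * f m)) ≤
          ENNReal.ofReal (C * Real.sqrt ω) * wnorm2 σ f) ∧
    (∀ σ' : ℝ, 3 / 2 < σ' →
      (∑' n : ℤ, ∑' m : ℤ, wt (-σ') n * wt (-σ') m *
        (‖(1 / 2 : ℂ)‖₊ : ℝ≥0∞) ^ 2) < ⊤ ∧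
      (∑' n : ℤ, ∑' m : ℤ, wt (-σ') n * wt (-σ') m *
        (‖-(1 / 2 : ℂ) * ((|n - m| : ℤ) : ℂ)‖₊ : ℝ≥0∞) ^ 2) < ⊤) := by
  refine ⟨?_, fun σ' hσ' => ⟨?_, ?_⟩⟩
  · have hW : ∑' n : ℤ, wt (2 - σ) n ≠ ⊤ := tsum_wt_ne_top (by linarith)
    have hW₀ : ∑' n : ℤ, wt (2 - σ) n ≠ 0 := by
      refine (zero_lt_one.trans_le ?_).ne'
      simpa [wt] using ENNReal.le_tsum (f := fun n => wt (2 - σ) n) 0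
    have hC : 0 < 6 * (∑' n : ℤ, wt (2 - σ) n).toReal :=
      mul_pos (by norm_num) (ENNReal.toReal_pos hW₀ hW)
    refine ⟨_, hC, 2, two_pos, by norm_num, fun ω hω hω₂ f => ?_⟩
    by_cases hf : wnorm2 σ f = ⊤
    · rw [hf, ENNReal.mul_top (ENNReal.ofReal_pos.mpr (by positivity)).ne']
      exact le_top
    obtain ⟨⟨hθπ, hθ₀⟩, hcos⟩ := hθ ω ⟨hω, by linarith⟩
    have hs : √ω = -(2 * Real.sin (θ ω / 2)) := by
      simpa only [hcos] using sqrt_two_sub_two_mul_cos hθπ.le hθ₀.le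
    have hθ₁ := neg_pi_div_two_le_of_cos_pos hθπ.le (by linarith : 0 < Real.cos (θ ω))
    rw [hs, mul_right_comm, ENNReal.ofReal_mul' ENNReal.toReal_nonneg, ENNReal.ofReal_toReal hW]
    exact wnorm2_resolvent_sub_puiseux_le hσ hθ₁ hθ₀ hf
  · exact hsNormSq_lt_top (p := 0) (c := 1 / 4) (by push_cast; linarith) fun n m => by norm_num
  · refine hsNormSq_lt_top (p := 1) (c := 1 / 2) (by push_cast; linarith) fun n m => ?_
    rw [norm_mul, norm_neg, norm_div, norm_one, Complex.norm_two, Complex.norm_intCast,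
      Int.cast_abs, abs_abs, mul_pow, sq_abs, Int.cast_sub, pow_one, pow_one]
    nlinarith [one_add_sq_sub_le n m]
end
end

section
/- Fix ω ∈ (0,4) with θ = θ₊(ω) ∈ (-π,0) the root of 2 - 2cos θ = ω, fix σ > 1/2, and let V be a real-valued potential with sup_{n∈ℤ} (1+n²)^σ |V_n| < ∞. If f ∈ l²_σ(ℤ) satisfies f_n - (i V_n / (2 sin θ)) ∑_{m∈ℤ} e^{-iθ|n-m|} f_m = 0 for all n ∈ ℤ, then ∑_{m∈ℤ} cos(θ m) f_m = 0 and ∑_{m∈ℤ} sin(θ m) f_m = 0. -/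
/-!
Write `K n m = exp (-iθ|n - m|)` and `g = K f`. The eigenvalue equation says `f n = c n * g n`
with `c n` purely imaginary, so `⟨f, K f⟩ = ∑ conj (c n) |g n|²` has zero real part. On the other
hand `Re K = cos (θ|n - m|) = cos θn cos θm + sin θn sin θm` and `Im K = -sin (θ|n - m|)` is a real
symmetric kernel, whose form is real; hence `Re ⟨f, K f⟩ = |∑ cos (θm) f m|² + |∑ sin (θm) f m|²`.
Since `l²_σ ⊆ l¹` for `σ > 1/2`, all double series converge absolutely.
-/

open scoped ENNReal NNReal BigOperators
open Complex Filter Topology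

noncomputable section

open ComplexConjugate

lemma summable_one_add_sq_rpow_neg {σ : ℝ} (hσ : 1 / 2 < σ) :
    Summable fun n : ℤ => (1 + (n : ℝ) ^ 2) ^ (-σ) := by
  refine (Real.summable_abs_int_rpow (b := 2 * σ) (by linarith)).of_norm_bounded_eventually ?_
  filter_upwards [(Set.finite_singleton (0 : ℤ)).compl_mem_cofinite] with n hn0
  have hn : (n : ℝ) ≠ 0 := by exact_mod_cast hn0
  rw [Real.norm_of_nonneg (by positivity)]
  calc (1 + (n : ℝ) ^ 2) ^ (-σ) ≤ ((n : ℝ) ^ 2) ^ (-σ) :=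
        Real.rpow_le_rpow_of_nonpos (by positivity) (by linarith) (by linarith)
    _ = |(n : ℝ)| ^ (-(2 * σ)) := by
        rw [← sq_abs, ← Real.rpow_natCast, ← Real.rpow_mul (abs_nonneg _)]
        push_cast
        ring_nf

lemma summable_weighted_sq_of_wnorm2_lt_top {σ : ℝ} {f : ℤ → ℂ} (hf : wnorm2 σ f < ⊤) :
    Summable fun n : ℤ => (1 + (n : ℝ) ^ 2) ^ σ * ‖f n‖ ^ 2 := by
  have hsum : ∑' n : ℤ, wt σ n * (‖f n‖₊ : ℝ≥0∞) ^ 2 ≠ ⊤ := by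
    intro h
    simp [wnorm2, h] at hf
  refine (ENNReal.summable_toReal hsum).congr fun n => ?_
  rw [wt, ENNReal.toReal_mul, ← ENNReal.toReal_rpow, ENNReal.toReal_ofReal (by positivity)]
  simp

lemma le_inv_add_mul_sq {a x : ℝ} (ha : 0 < a) (hx : 0 ≤ x) : x ≤ a⁻¹ + a * x ^ 2 := by
  rw [← sub_nonneg]
  have : a⁻¹ + a * x ^ 2 - x = a⁻¹ * ((a * x - 1) ^ 2 + a * x) := by
    field_simp
    ring
  rw [this]
  positivity

lemma summable_norm_of_wnorm2_lt_top {σ : ℝ} (hσ : 1 / 2 < σ) {f : ℤ → ℂ}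
    (hf : wnorm2 σ f < ⊤) : Summable fun n => ‖f n‖ := by
  refine .of_nonneg_of_le (fun n => norm_nonneg _) (fun n => ?_)
    ((summable_one_add_sq_rpow_neg hσ).add (summable_weighted_sq_of_wnorm2_lt_top hf))
  rw [Real.rpow_neg (by positivity)]
  exact le_inv_add_mul_sq (by positivity) (norm_nonneg _)

def quadForm (k : ℤ → ℤ → ℂ) (f : ℤ → ℂ) : ℂ :=
  ∑' p : ℤ × ℤ, conj (f p.1) * k p.1 p.2 * f p.2

section quadForm

variable {k k' : ℤ → ℤ → ℂ} {f : ℤ → ℂ} {B B' : ℝ}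

lemma summable_quadForm (hk : ∀ n m, ‖k n m‖ ≤ B) (hf : Summable fun n => ‖f n‖) :
    Summable fun p : ℤ × ℤ => conj (f p.1) * k p.1 p.2 * f p.2 := by
  refine .of_norm_bounded
    ((hf.mul_of_nonneg hf (fun _ => norm_nonneg _) (fun _ => norm_nonneg _)).mul_left B)
    fun p => ?_
  rw [norm_mul, norm_mul, Complex.norm_conj]
  calc ‖f p.1‖ * ‖k p.1 p.2‖ * ‖f p.2‖ ≤ ‖f p.1‖ * B * ‖f p.2‖ := by gcongr; exact hk _ _
    _ = B * (‖f p.1‖ * ‖f p.2‖) := by ring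

lemma quadForm_add (hk : ∀ n m, ‖k n m‖ ≤ B) (hk' : ∀ n m, ‖k' n m‖ ≤ B')
    (hf : Summable fun n => ‖f n‖) :
    quadForm (fun n m => k n m + k' n m) f = quadForm k f + quadForm k' f := by
  rw [quadForm, quadForm, quadForm,
    ← (summable_quadForm hk hf).tsum_add (summable_quadForm hk' hf)]
  exact tsum_congr fun p => by ring

lemma quadForm_const_mul (c : ℂ) : quadForm (fun n m => c * k n m) f = c * quadForm k f := by
  rw [quadForm, quadForm, ← tsum_mul_left]
  exact tsum_congr fun p => by ring

lemma quadForm_eq_tsum (hk : ∀ n m, ‖k n m‖ ≤ B) (hf : Summable fun n => ‖f n‖) :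
    quadForm k f = ∑' n, conj (f n) * ∑' m, k n m * f m := by
  rw [quadForm, (summable_quadForm hk hf).tsum_prod]
  exact tsum_congr fun n => by simp_rw [← tsum_mul_left, mul_assoc]

lemma quadForm_rankOne {u : ℤ → ℝ} (hu : ∀ n, |u n| ≤ B) (hf : Summable fun n => ‖f n‖) :
    quadForm (fun n m => (u n : ℂ) * u m) f = normSq (∑' m, (u m : ℂ) * f m) := by
  have hs : Summable fun m => ‖(u m : ℂ) * f m‖ :=
    .of_nonneg_of_le (fun _ => norm_nonneg _)
      (fun m => by rw [norm_mul, Complex.norm_real, Real.norm_eq_abs]; gcongr; exact hu m)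
      (hf.mul_left B)
  rw [normSq_eq_conj_mul_self, Complex.conj_tsum,
    tsum_mul_tsum_of_summable_norm (by simpa using hs) hs, quadForm]
  exact tsum_congr fun p => by simp only [map_mul, Complex.conj_ofReal]; ring

lemma im_quadForm_ofReal_of_symm {k : ℤ → ℤ → ℝ} (hk : ∀ n m, k n m = k m n) :
    (quadForm (fun n m => k n m) f).im = 0 := by
  rw [← Complex.conj_eq_iff_im, quadForm, Complex.conj_tsum,
    ← (Equiv.prodComm ℤ ℤ).tsum_eq]
  exact tsum_congr fun p => by simp [hk p.1 p.2]; ring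

lemma re_quadForm_eq_zero_of_eq_mul (hk : ∀ n m, ‖k n m‖ ≤ B) (hf : Summable fun n => ‖f n‖)
    {c : ℤ → ℂ} (hc : ∀ n, (c n).re = 0) (h : ∀ n, f n = c n * ∑' m, k n m * f m) :
    (quadForm k f).re = 0 := by
  have hs := (summable_quadForm hk hf).prod
  simp_rw [mul_assoc, tsum_mul_left] at hs
  rw [quadForm_eq_tsum hk hf, Complex.re_tsum hs]
  refine (tsum_congr fun n => ?_).trans tsum_zero
  rw [h n, map_mul, mul_assoc, ← normSq_eq_conj_mul_self]
  simp [hc n]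

end quadForm

def resolventKernel (θ : ℝ) (n m : ℤ) : ℂ :=
  Complex.exp (-Complex.I * (θ : ℂ) * ((|n - m| : ℤ) : ℂ))

section resolventKernel

variable (θ : ℝ)

lemma resolventKernel_eq_exp_ofReal_mul_I (n m : ℤ) :
    resolventKernel θ n m = exp ((-(θ * ((|n - m| : ℤ) : ℝ)) : ℝ) * I) := by
  rw [resolventKernel, ofReal_neg, ofReal_mul, ofReal_intCast]
  ring_nf

lemma norm_resolventKernel (n m : ℤ) : ‖resolventKernel θ n m‖ = 1 := by
  rw [resolventKernel_eq_exp_ofReal_mul_I]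
  exact norm_exp_ofReal_mul_I _

lemma resolventKernel_eq (n m : ℤ) :
    resolventKernel θ n m =
      ((Real.cos (θ * n) : ℂ) * Real.cos (θ * m) + (Real.sin (θ * n) : ℂ) * Real.sin (θ * m)) +
        -I * (Real.sin (θ * ((|n - m| : ℤ) : ℝ)) : ℝ) := by
  have hcos : Real.cos (θ * ((|n - m| : ℤ) : ℝ)) = Real.cos (θ * n - θ * m) := by
    rcases abs_choice (n - m) with h | h <;> rw [h]
    · push_cast; ring_nf
    · rw [← Real.cos_neg]; push_cast; ring_nf
  rw [resolventKernel_eq_exp_ofReal_mul_I, exp_mul_I, ← ofReal_cos, ← ofReal_sin,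
    Real.cos_neg, Real.sin_neg, hcos, Real.cos_sub]
  push_cast
  ring

lemma re_quadForm_resolventKernel {f : ℤ → ℂ} (hf : Summable fun n => ‖f n‖) :
    (quadForm (resolventKernel θ) f).re =
      normSq (∑' m : ℤ, (Real.cos (θ * m) : ℂ) * f m) +
        normSq (∑' m : ℤ, (Real.sin (θ * m) : ℂ) * f m) := by
  have hcos (n : ℤ) : |Real.cos (θ * n)| ≤ 1 := Real.abs_cos_le_one _
  have hsin (n : ℤ) : |Real.sin (θ * n)| ≤ 1 := Real.abs_sin_le_one _
  have hrank {u : ℤ → ℝ} (hu : ∀ n, |u n| ≤ 1) (n m : ℤ) : ‖(u n : ℂ) * u m‖ ≤ 1 := by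
    rw [norm_mul, norm_real, norm_real]
    exact mul_le_one₀ (hu n) (norm_nonneg _) (hu m)
  have hsinKernel (n m : ℤ) : ‖-I * (Real.sin (θ * ((|n - m| : ℤ) : ℝ)) : ℂ)‖ ≤ 1 := by
    rw [norm_mul, norm_neg, norm_I, one_mul, norm_real]
    exact Real.abs_sin_le_one _
  have hsymm (n m : ℤ) :
      Real.sin (θ * ((|n - m| : ℤ) : ℝ)) = Real.sin (θ * ((|m - n| : ℤ) : ℝ)) := by
    rw [abs_sub_comm]
  rw [show resolventKernel θ = _ from funext₂ (resolventKernel_eq θ),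
    quadForm_add (fun n m => (norm_add_le _ _).trans (add_le_add (hrank hcos n m)
      (hrank hsin n m))) hsinKernel hf,
    quadForm_add (hrank hcos) (hrank hsin) hf, quadForm_rankOne hcos hf,
    quadForm_rankOne hsin hf, quadForm_const_mul]
  rw [add_re, add_re, ofReal_re, ofReal_re, neg_mul, neg_re, I_mul_re,
    im_quadForm_ofReal_of_symm hsymm, neg_zero, neg_zero, add_zero]

end resolventKernel

theorem statement16_general (θ : ℝ) (σ : ℝ) (hσ : 1 / 2 < σ) (V : ℤ → ℝ)
    (f : ℤ → ℂ) (hf : wnorm2 σ f < ⊤)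
    (heig : ∀ n : ℤ, f n - Complex.I * (V n : ℂ) / (2 * (Real.sin θ : ℂ)) *
      ∑' m : ℤ, Complex.exp (-Complex.I * (θ : ℂ) * ((|n - m| : ℤ) : ℂ)) * f m = 0) :
    (∑' m : ℤ, (Real.cos (θ * m) : ℂ) * f m) = 0 ∧
    (∑' m : ℤ, (Real.sin (θ * m) : ℂ) * f m) = 0 := by
  have hf₁ := summable_norm_of_wnorm2_lt_top hσ hf
  have hre : (quadForm (resolventKernel θ) f).re = 0 :=
    re_quadForm_eq_zero_of_eq_mul (fun n m => (norm_resolventKernel θ n m).le) hf₁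
      (c := fun n => I * V n / (2 * Real.sin θ)) (fun n => by simp [div_re])
      (fun n => sub_eq_zero.1 (heig n))
  rw [re_quadForm_resolventKernel θ hf₁] at hre
  have hC := normSq_nonneg (∑' m : ℤ, (Real.cos (θ * m) : ℂ) * f m)
  have hS := normSq_nonneg (∑' m : ℤ, (Real.sin (θ * m) : ℂ) * f m)
  exact ⟨normSq_eq_zero.1 (by linarith), normSq_eq_zero.1 (by linarith)⟩

/-- Eigenvectors of `I + V R₀⁺(ω)` satisfy two orthogonality
constraints.  Fix `ω ∈ (0,4)` with `θ = θ₊(ω) ∈ (-π,0)` the root of `2 - 2cos θ = ω`,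
fix `σ > 1/2` and let `V` be real-valued with `sup_n (1+n²)^σ |V_n| < ∞`.  If `f ∈ l²_σ`
satisfies `f_n - (i V_n/(2 sin θ)) ∑_m e^{-iθ|n-m|} f_m = 0` for all `n`, then
`∑_m cos(θm) f_m = 0` and `∑_m sin(θm) f_m = 0`. -/
theorem statement16 (ω : ℝ) (hω : ω ∈ Set.Ioo (0 : ℝ) 4)
    (θ : ℝ) (hθ : θ ∈ Set.Ioo (-Real.pi) 0) (hθeq : 2 - 2 * Real.cos θ = ω)
    (σ : ℝ) (hσ : 1 / 2 < σ) (V : ℤ → ℝ)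
    (hV : ∃ A : ℝ, ∀ n : ℤ, (1 + (n : ℝ) ^ 2) ^ σ * |V n| ≤ A)
    (f : ℤ → ℂ) (hf : wnorm2 σ f < ⊤)
    (heig : ∀ n : ℤ, f n - Complex.I * (V n : ℂ) / (2 * (Real.sin θ : ℂ)) *
      ∑' m : ℤ, Complex.exp (-Complex.I * (θ : ℂ) * ((|n - m| : ℤ) : ℂ)) * f m = 0) :
    (∑' m : ℤ, (Real.cos (θ * m) : ℂ) * f m) = 0 ∧
    (∑' m : ℤ, (Real.sin (θ * m) : ℂ) * f m) = 0 :=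
  statement16_general θ σ hσ V f hf heig
end
end
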